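/- arXiv:2602.18411 — 4 statements merged into one kernel-verified Lean document; each statement's English description precedes it below -/
import Mathlib

section
/- Let α₁, α₂ ∈ [0,1) and γ₁, γ₂ ≥ 0. Then there exists a finite constant C = C(α₁, α₂, γ₁, γ₂) such that for all t > 0 and all ε > 0, ∫₀ᵗ s^{-α₁} (t-s)^{-α₂} · min(ε · s^{-γ₁} (t-s)^{-γ₂}, 1) ds ≤ C · t^{1-α₁-α₂} · (ℓ_{α₁,γ₁}(ε t^{-γ₁-γ₂}) + ℓ_{α₂,γ₂}(ε t^{-γ₁-γ₂})), where for α ≥ 0, γ ≥ 0 and ε > 0 the function ℓ is defined by ℓ_{α,γ}(ε) = min(ε,1) if γ < 1-α; ℓ_{α,γ}(ε) = min(ε(1+|log ε|), 1) if γ = 1-α; and ℓ_{α,γ}(ε) = min(ε^{(1-α)/γ}, 1) if γ > 1-α. -/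
/-!
Substituting `s = t u` reduces the estimate to `t = 1` with `η = ε t^(-(γ₁ + γ₂))`. On
`u ≤ 1/2` the factors in `1 - u` are at most `2^α₂` and `2^γ₂`, and symmetrically on `u ≥ 1/2`,
so the integrand is dominated by the one-sided kernels `u^(-α) min(η u^(-γ), 1)` and their
reflections. For a one-sided kernel, bound the minimum by `1` below `a = η^(1/γ)` and by
`η u^(-γ)` above it: the three regimes of `ℓ_{α,γ}` are whether `∫_a^1 u^(-α-γ) du` stays bounded
as `a → 0`, grows like `log (1/a)`, or grows like `a^(1-α-γ)`.
-/

open MeasureTheory Set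

/-- The function ℓ_{α,γ}(ε) from the singular integral lemma. -/
noncomputable def ell (α γ ε : ℝ) : ℝ :=
  if γ < 1 - α then min ε 1
  else if γ = 1 - α then min (ε * (1 + |Real.log ε|)) 1
  else min (ε ^ ((1 - α) / γ)) 1

open Real intervalIntegral
open scoped Interval

lemma ell_nonneg (α γ : ℝ) {ε : ℝ} (hε : 0 ≤ ε) : 0 ≤ ell α γ ε := by
  unfold ell
  split_ifs <;> positivity

lemma min_mul_le_mul_min {c x : ℝ} (hc : 1 ≤ c) : min (c * x) 1 ≤ c * min x 1 := by
  rw [mul_min_of_nonneg _ _ (by linarith), mul_one]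
  exact min_le_min_left _ hc

lemma intervalIntegrable_of_nonneg_of_le {f g : ℝ → ℝ} {a b : ℝ} (hab : a ≤ b)
    (hf : AEStronglyMeasurable f) (hg : IntervalIntegrable g volume a b)
    (h0 : ∀ x ∈ Ioo a b, 0 ≤ f x) (hfg : ∀ x ∈ Ioo a b, f x ≤ g x) :
    IntervalIntegrable f volume a b := by
  refine hg.mono_fun' hf.restrict ?_
  rw [uIoc_of_le hab]
  refine ae_restrict_of_ae_eq_of_ae_restrict Ioo_ae_eq_Ioc ?_
  filter_upwards [ae_restrict_mem measurableSet_Ioo] with x hx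
  rw [Real.norm_eq_abs, abs_of_nonneg (h0 x hx)]
  exact hfg x hx

lemma integral_rpow_from_zero {r b : ℝ} (hr : -1 < r) :
    ∫ x in (0)..b, x ^ r = b ^ (r + 1) / (r + 1) := by
  rw [integral_rpow (Or.inl hr), zero_rpow (by linarith), sub_zero]

lemma exists_rpow_eq_of_lt_one {η γ : ℝ} (hη : 0 < η) (hη1 : η < 1) (hγ : 0 < γ) :
    ∃ a, 0 < a ∧ a ≤ 1 ∧ a ^ γ = η :=
  ⟨η ^ γ⁻¹, by positivity, rpow_le_one hη.le hη1.le (by positivity),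
    rpow_inv_rpow hη.le hγ.ne'⟩

section OneSided

variable {α γ η : ℝ}

lemma rpow_mul_min_le_rpow {u : ℝ} (hu : 0 ≤ u) :
    u ^ (-α) * min (η * u ^ (-γ)) 1 ≤ u ^ (-α) :=
  mul_le_of_le_one_right (by positivity) (min_le_right _ _)

lemma rpow_mul_min_le_mul_rpow {u : ℝ} (hu : 0 < u) :
    u ^ (-α) * min (η * u ^ (-γ)) 1 ≤ η * u ^ (-(α + γ)) := by
  calc u ^ (-α) * min (η * u ^ (-γ)) 1 ≤ u ^ (-α) * (η * u ^ (-γ)) := by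
        gcongr; exact min_le_left _ _
    _ = η * u ^ (-(α + γ)) := by rw [neg_add, rpow_add hu]; ring

lemma intervalIntegrable_rpow_mul_min (hα : α < 1) (hη : 0 ≤ η) :
    IntervalIntegrable (fun u : ℝ => u ^ (-α) * min (η * u ^ (-γ)) 1) volume 0 1 :=
  intervalIntegrable_of_nonneg_of_le zero_le_one (by fun_prop)
    (intervalIntegrable_rpow' (by linarith))
    (fun _ hu => by have := hu.1.le; positivity) (fun _ hu => rpow_mul_min_le_rpow hu.1.le)

lemma integral_rpow_mul_min_le_inv (hα : α < 1) (hη : 0 ≤ η) :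
    ∫ u in (0)..1, u ^ (-α) * min (η * u ^ (-γ)) 1 ≤ (1 - α)⁻¹ := by
  calc ∫ u in (0)..1, u ^ (-α) * min (η * u ^ (-γ)) 1 ≤ ∫ u in (0)..1, u ^ (-α) :=
        integral_mono_on_of_le_Ioo zero_le_one (intervalIntegrable_rpow_mul_min hα hη)
          (intervalIntegrable_rpow' (by linarith)) fun _ hu => rpow_mul_min_le_rpow hu.1.le
    _ = (1 - α)⁻¹ := by rw [integral_rpow_from_zero (by linarith)]; simp [neg_add_eq_sub]

lemma integral_rpow_mul_min_le_mul (hα : α < 1) (hαγ : α + γ < 1) (hη : 0 ≤ η) :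
    ∫ u in (0)..1, u ^ (-α) * min (η * u ^ (-γ)) 1 ≤ (1 - α - γ)⁻¹ * η := by
  calc ∫ u in (0)..1, u ^ (-α) * min (η * u ^ (-γ)) 1
      ≤ ∫ u in (0)..1, η * u ^ (-(α + γ)) :=
        integral_mono_on_of_le_Ioo zero_le_one (intervalIntegrable_rpow_mul_min hα hη)
          ((intervalIntegrable_rpow' (by linarith)).const_mul η)
          fun _ hu => rpow_mul_min_le_mul_rpow hu.1
    _ = (1 - α - γ)⁻¹ * η := by
        rw [intervalIntegral.integral_const_mul, integral_rpow_from_zero (by linarith)]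
        rw [one_rpow, show -(α + γ) + 1 = 1 - α - γ by ring]
        ring

lemma integral_rpow_mul_min_le_split (hα : α < 1) (hη : 0 ≤ η) {a : ℝ} (ha : 0 < a)
    (ha1 : a ≤ 1) :
    ∫ u in (0)..1, u ^ (-α) * min (η * u ^ (-γ)) 1
      ≤ a ^ (1 - α) / (1 - α) + η * ∫ u in a..1, u ^ (-(α + γ)) := by
  have hI := intervalIntegrable_rpow_mul_min (γ := γ) hα hη
  have ha' : a ∈ [[(0 : ℝ), 1]] := by rw [uIcc_of_le zero_le_one]; exact ⟨ha.le, ha1⟩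
  have hI₁ := hI.mono_set (uIcc_subset_uIcc left_mem_uIcc ha')
  have hI₂ := hI.mono_set (uIcc_subset_uIcc ha' right_mem_uIcc)
  rw [← integral_add_adjacent_intervals hI₁ hI₂, ← intervalIntegral.integral_const_mul]
  gcongr ?_ + ?_
  · calc ∫ u in (0)..a, u ^ (-α) * min (η * u ^ (-γ)) 1 ≤ ∫ u in (0)..a, u ^ (-α) :=
          integral_mono_on_of_le_Ioo ha.le hI₁ (intervalIntegrable_rpow' (by linarith))
            fun _ hu => rpow_mul_min_le_rpow hu.1.le
      _ = a ^ (1 - α) / (1 - α) := by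
          rw [integral_rpow_from_zero (by linarith), neg_add_eq_sub]
  · have h0 : (0 : ℝ) ∉ [[a, 1]] := by rw [uIcc_of_le ha1]; exact fun h => h.1.not_gt ha
    exact integral_mono_on_of_le_Ioo ha1 hI₂ ((intervalIntegrable_rpow (Or.inr h0)).const_mul η)
      fun _ hu => rpow_mul_min_le_mul_rpow (ha.trans hu.1)

lemma integral_rpow_mul_min_le_log (hα : α < 1) (hη : 0 < η) :
    ∫ u in (0)..1, u ^ (-α) * min (η * u ^ (-(1 - α))) 1
      ≤ (1 - α)⁻¹ * min (η * (1 + |log η|)) 1 := by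
  have hβ : 0 < 1 - α := by linarith
  rw [mul_min_of_nonneg _ _ (by positivity), mul_one]
  refine le_min ?_ (integral_rpow_mul_min_le_inv hα hη.le)
  rcases lt_or_ge η 1 with hη1 | hη1
  · obtain ⟨a, ha, ha1, rfl⟩ := exists_rpow_eq_of_lt_one hη hη1 hβ
    have hlog : log (a ^ (1 - α)) = (1 - α) * log a := log_rpow ha _
    have hloga : log a ≤ 0 := log_nonpos ha.le ha1
    calc ∫ u in (0)..1, u ^ (-α) * min (a ^ (1 - α) * u ^ (-(1 - α))) 1
        ≤ a ^ (1 - α) / (1 - α) + a ^ (1 - α) * ∫ u in a..1, u ^ (-(α + (1 - α))) :=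
          integral_rpow_mul_min_le_split hα (by positivity) ha ha1
      _ = (1 - α)⁻¹ * (a ^ (1 - α) * (1 + |log (a ^ (1 - α))|)) := by
          rw [show -(α + (1 - α)) = -1 by ring, hlog, abs_of_nonpos (by nlinarith)]
          simp only [rpow_neg_one]
          rw [integral_inv_of_pos ha one_pos, one_div, log_inv]
          field_simp
  · calc _ ≤ (1 - α)⁻¹ := integral_rpow_mul_min_le_inv hα hη.le
      _ ≤ (1 - α)⁻¹ * (η * (1 + |log η|)) := by
          refine le_mul_of_one_le_right (by positivity) ?_
          nlinarith [abs_nonneg (log η)]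

lemma integral_rpow_mul_min_le_rpow (hα : α < 1) (hαγ : 1 < α + γ) (hη : 0 < η) :
    ∫ u in (0)..1, u ^ (-α) * min (η * u ^ (-γ)) 1
      ≤ ((1 - α)⁻¹ + (α + γ - 1)⁻¹) * min (η ^ ((1 - α) / γ)) 1 := by
  have hγ : 0 < γ := by linarith
  rw [mul_min_of_nonneg _ _ (by positivity), mul_one]
  refine le_min ?_ ((integral_rpow_mul_min_le_inv hα hη.le).trans
    (le_add_of_nonneg_right (by positivity)))
  rcases lt_or_ge η 1 with hη1 | hη1
  · obtain ⟨a, ha, ha1, rfl⟩ := exists_rpow_eq_of_lt_one hη hη1 hγ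
    have h0 : (0 : ℝ) ∉ [[a, 1]] := by rw [uIcc_of_le ha1]; exact fun h => h.1.not_gt ha
    have hint : ∫ u in a..1, u ^ (-(α + γ)) ≤ a ^ (1 - α - γ) / (α + γ - 1) := by
      rw [integral_rpow (Or.inr ⟨by linarith, h0⟩),
        one_rpow, show -(α + γ) + 1 = -(α + γ - 1) by ring, div_neg, ← neg_div, neg_sub,
        show -(α + γ - 1) = 1 - α - γ by ring]
      gcongr
      linarith
    calc ∫ u in (0)..1, u ^ (-α) * min (a ^ γ * u ^ (-γ)) 1
        ≤ a ^ (1 - α) / (1 - α) + a ^ γ * ∫ u in a..1, u ^ (-(α + γ)) :=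
          integral_rpow_mul_min_le_split hα (by positivity) ha ha1
      _ ≤ a ^ (1 - α) / (1 - α) + a ^ γ * (a ^ (1 - α - γ) / (α + γ - 1)) := by gcongr
      _ = ((1 - α)⁻¹ + (α + γ - 1)⁻¹) * (a ^ γ) ^ ((1 - α) / γ) := by
          rw [← rpow_mul ha.le, mul_div_cancel₀ _ hγ.ne', mul_div_assoc', ← rpow_add ha,
            add_sub_cancel]
          ring
  · calc _ ≤ (1 - α)⁻¹ := integral_rpow_mul_min_le_inv hα hη.le
      _ ≤ (1 - α)⁻¹ + (α + γ - 1)⁻¹ := le_add_of_nonneg_right (inv_pos.2 (by linarith)).le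
      _ ≤ ((1 - α)⁻¹ + (α + γ - 1)⁻¹) * η ^ ((1 - α) / γ) := by
          refine le_mul_of_one_le_right (by positivity) ?_
          exact one_le_rpow hη1 (by positivity)

end OneSided

theorem exists_integral_rpow_mul_min_le_ell (α γ : ℝ) (hα : α < 1) :
    ∃ C, 0 ≤ C ∧ ∀ η, 0 < η →
      ∫ u in (0)..1, u ^ (-α) * min (η * u ^ (-γ)) 1 ≤ C * ell α γ η := by
  unfold ell
  split_ifs with hlt heq
  · have hαγ : 0 < 1 - α - γ := by linarith
    refine ⟨max (1 - α)⁻¹ (1 - α - γ)⁻¹, by positivity, fun η hη => ?_⟩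
    rw [mul_min_of_nonneg _ _ (by positivity), mul_one]
    exact le_min ((integral_rpow_mul_min_le_mul hα (by linarith) hη.le).trans
        (by gcongr; exact le_max_right _ _))
      ((integral_rpow_mul_min_le_inv hα hη.le).trans (le_max_left _ _))
  · subst heq
    exact ⟨_, (inv_pos.2 (by linarith)).le,
      fun η hη => integral_rpow_mul_min_le_log hα hη⟩
  · have hgt : 1 < α + γ := by
      have := lt_of_le_of_ne (not_lt.1 hlt) (Ne.symm heq)
      linarith
    exact ⟨_, (add_pos (inv_pos.2 (by linarith)) (inv_pos.2 (by linarith))).le,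
      fun η hη => integral_rpow_mul_min_le_rpow hα hgt hη⟩

lemma rpow_neg_le_two_rpow {y b : ℝ} (hy : 1 / 2 ≤ y) (hb : 0 ≤ b) : y ^ (-b) ≤ 2 ^ b := by
  calc y ^ (-b) ≤ (1 / 2) ^ (-b) := rpow_le_rpow_of_nonpos (by norm_num) hy (by linarith)
    _ = 2 ^ b := by rw [one_div, inv_rpow zero_le_two, ← rpow_neg zero_le_two, neg_neg]

lemma rpow_mul_rpow_mul_min_le {a b c d η x y : ℝ} (hb : 0 ≤ b) (hd : 0 ≤ d) (hη : 0 ≤ η)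
    (hx : 0 ≤ x) (hy : 1 / 2 ≤ y) :
    x ^ (-a) * y ^ (-b) * min (η * x ^ (-c) * y ^ (-d)) 1
      ≤ 2 ^ (b + d) * (x ^ (-a) * min (η * x ^ (-c)) 1) := by
  have hmin : min (η * x ^ (-c) * y ^ (-d)) 1 ≤ 2 ^ d * min (η * x ^ (-c)) 1 :=
    calc min (η * x ^ (-c) * y ^ (-d)) 1 ≤ min (2 ^ d * (η * x ^ (-c))) 1 := by
          rw [mul_comm (2 ^ d)]
          gcongr
          exact rpow_neg_le_two_rpow hy hd
      _ ≤ 2 ^ d * min (η * x ^ (-c)) 1 := min_mul_le_mul_min (one_le_rpow one_le_two hd)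
  calc x ^ (-a) * y ^ (-b) * min (η * x ^ (-c) * y ^ (-d)) 1
      ≤ x ^ (-a) * 2 ^ b * (2 ^ d * min (η * x ^ (-c)) 1) := by
        gcongr
        exact rpow_neg_le_two_rpow hy hb
    _ = 2 ^ (b + d) * (x ^ (-a) * min (η * x ^ (-c)) 1) := by
        rw [rpow_add two_pos]
        ring

noncomputable def singularKernel (α₁ α₂ γ₁ γ₂ ε t s : ℝ) : ℝ :=
  s ^ (-α₁) * (t - s) ^ (-α₂) * min (ε * s ^ (-γ₁) * (t - s) ^ (-γ₂)) 1

section SingularKernel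

variable {α₁ α₂ γ₁ γ₂ : ℝ}

lemma measurable_singularKernel (ε t : ℝ) : Measurable (singularKernel α₁ α₂ γ₁ γ₂ ε t) := by
  unfold singularKernel
  fun_prop

lemma singularKernel_nonneg {ε t s : ℝ} (hε : 0 ≤ ε) (hs : 0 ≤ s) (hst : s ≤ t) :
    0 ≤ singularKernel α₁ α₂ γ₁ γ₂ ε t s := by
  have : 0 ≤ t - s := by linarith
  unfold singularKernel
  positivity

lemma singularKernel_mul {ε t u : ℝ} (ht : 0 < t) (hu : 0 ≤ u) (hu1 : u ≤ 1) :
    singularKernel α₁ α₂ γ₁ γ₂ ε t (t * u)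
      = t ^ (-α₁ - α₂) * singularKernel α₁ α₂ γ₁ γ₂ (ε * t ^ (-(γ₁ + γ₂))) 1 u := by
  have h1u : 0 ≤ 1 - u := by linarith
  unfold singularKernel
  rw [show t - t * u = t * (1 - u) by ring, mul_rpow ht.le hu, mul_rpow ht.le h1u,
    mul_rpow ht.le hu, mul_rpow ht.le h1u, show -α₁ - α₂ = -α₁ + -α₂ by ring, neg_add,
    rpow_add ht, rpow_add ht]
  ring_nf

lemma integral_singularKernel_eq {ε t : ℝ} (ht : 0 < t) :
    ∫ s in Ioo 0 t, singularKernel α₁ α₂ γ₁ γ₂ ε t s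
      = t ^ (1 - α₁ - α₂) *
          ∫ u in (0)..1, singularKernel α₁ α₂ γ₁ γ₂ (ε * t ^ (-(γ₁ + γ₂))) 1 u := by
  have hsub := smul_integral_comp_mul_left (singularKernel α₁ α₂ γ₁ γ₂ ε t) t (a := 0) (b := 1)
  rw [mul_zero, mul_one] at hsub
  have hscale : EqOn (fun u => singularKernel α₁ α₂ γ₁ γ₂ ε t (t * u))
      (fun u => t ^ (-α₁ - α₂) * singularKernel α₁ α₂ γ₁ γ₂ (ε * t ^ (-(γ₁ + γ₂))) 1 u)
      [[0, 1]] := by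
    intro u hu
    rw [uIcc_of_le zero_le_one] at hu
    exact singularKernel_mul ht hu.1 hu.2
  rw [← integral_Ioc_eq_integral_Ioo, ← intervalIntegral.integral_of_le ht.le, ← hsub,
    smul_eq_mul, integral_congr hscale, intervalIntegral.integral_const_mul, ← mul_assoc,
    show 1 - α₁ - α₂ = 1 + (-α₁ - α₂) by ring, rpow_add ht, rpow_one]

lemma singularKernel_one_le {η u : ℝ} (hα₁ : 0 ≤ α₁) (hα₂ : 0 ≤ α₂) (hγ₁ : 0 ≤ γ₁)
    (hγ₂ : 0 ≤ γ₂) (hη : 0 ≤ η) (hu : u ∈ Icc (0 : ℝ) 1) :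
    singularKernel α₁ α₂ γ₁ γ₂ η 1 u
      ≤ 2 ^ (α₂ + γ₂) * (u ^ (-α₁) * min (η * u ^ (-γ₁)) 1)
        + 2 ^ (α₁ + γ₁) * ((1 - u) ^ (-α₂) * min (η * (1 - u) ^ (-γ₂)) 1) := by
  have h1u : 0 ≤ 1 - u := by linarith [hu.2]
  unfold singularKernel
  rcases le_total u (1 / 2) with hu2 | hu2
  · have := rpow_mul_rpow_mul_min_le (a := α₁) (c := γ₁) hα₂ hγ₂ hη hu.1 (y := 1 - u)
      (by linarith)
    have : 0 ≤ 2 ^ (α₁ + γ₁) * ((1 - u) ^ (-α₂) * min (η * (1 - u) ^ (-γ₂)) 1) := by positivity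
    linarith
  · have := rpow_mul_rpow_mul_min_le (a := α₂) (c := γ₂) hα₁ hγ₁ hη h1u (y := u) hu2
    have : 0 ≤ 2 ^ (α₂ + γ₂) * (u ^ (-α₁) * min (η * u ^ (-γ₁)) 1) := by positivity
    rw [mul_comm (u ^ (-α₁)), mul_right_comm η]
    linarith

lemma integral_singularKernel_one_le {η : ℝ} (hα₁ : α₁ ∈ Ico 0 1) (hα₂ : α₂ ∈ Ico 0 1)
    (hγ₁ : 0 ≤ γ₁) (hγ₂ : 0 ≤ γ₂) (hη : 0 ≤ η) :
    ∫ u in (0)..1, singularKernel α₁ α₂ γ₁ γ₂ η 1 u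
      ≤ 2 ^ (α₂ + γ₂) * (∫ u in (0)..1, u ^ (-α₁) * min (η * u ^ (-γ₁)) 1)
        + 2 ^ (α₁ + γ₁) * ∫ u in (0)..1, u ^ (-α₂) * min (η * u ^ (-γ₂)) 1 := by
  set g₁ := fun u : ℝ => u ^ (-α₁) * min (η * u ^ (-γ₁)) 1
  set g₂ := fun u : ℝ => u ^ (-α₂) * min (η * u ^ (-γ₂)) 1
  have hg₁ : IntervalIntegrable g₁ volume 0 1 := intervalIntegrable_rpow_mul_min hα₁.2 hη
  have hg₂ : IntervalIntegrable (fun u => g₂ (1 - u)) volume 0 1 := by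
    simpa using ((intervalIntegrable_rpow_mul_min hα₂.2 hη).comp_sub_left 1).symm
  have hmaj := (hg₁.const_mul (2 ^ (α₂ + γ₂))).add (hg₂.const_mul (2 ^ (α₁ + γ₁)))
  have hle : ∀ u ∈ Ioo (0 : ℝ) 1, singularKernel α₁ α₂ γ₁ γ₂ η 1 u
      ≤ 2 ^ (α₂ + γ₂) * g₁ u + 2 ^ (α₁ + γ₁) * g₂ (1 - u) := fun u hu =>
    singularKernel_one_le hα₁.1 hα₂.1 hγ₁ hγ₂ hη (Ioo_subset_Icc_self hu)
  have hK : IntervalIntegrable (singularKernel α₁ α₂ γ₁ γ₂ η 1) volume 0 1 :=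
    intervalIntegrable_of_nonneg_of_le zero_le_one
      (measurable_singularKernel _ _).aestronglyMeasurable hmaj
      (fun u hu => singularKernel_nonneg hη hu.1.le hu.2.le) hle
  have hreflect : ∫ u in (0)..1, g₂ (1 - u) = ∫ u in (0)..1, g₂ u := by
    simp [integral_comp_sub_left g₂ 1]
  calc ∫ u in (0)..1, singularKernel α₁ α₂ γ₁ γ₂ η 1 u
      ≤ ∫ u in (0)..1, 2 ^ (α₂ + γ₂) * g₁ u + 2 ^ (α₁ + γ₁) * g₂ (1 - u) :=
        integral_mono_on_of_le_Ioo zero_le_one hK hmaj hle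
    _ = _ := by
        rw [integral_add (hg₁.const_mul _) (hg₂.const_mul _),
          intervalIntegral.integral_const_mul, intervalIntegral.integral_const_mul, hreflect]

theorem exists_integral_singularKernel_one_le (hα₁ : α₁ ∈ Ico 0 1) (hα₂ : α₂ ∈ Ico 0 1)
    (hγ₁ : 0 ≤ γ₁) (hγ₂ : 0 ≤ γ₂) :
    ∃ C, 0 ≤ C ∧ ∀ η, 0 < η →
      ∫ u in (0)..1, singularKernel α₁ α₂ γ₁ γ₂ η 1 u ≤ C * (ell α₁ γ₁ η + ell α₂ γ₂ η) := by
  obtain ⟨C₁, hC₁, h₁⟩ := exists_integral_rpow_mul_min_le_ell α₁ γ₁ hα₁.2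
  obtain ⟨C₂, hC₂, h₂⟩ := exists_integral_rpow_mul_min_le_ell α₂ γ₂ hα₂.2
  set A₁ : ℝ := 2 ^ (α₂ + γ₂)
  set A₂ : ℝ := 2 ^ (α₁ + γ₁)
  refine ⟨A₁ * C₁ + A₂ * C₂, by positivity, fun η hη => ?_⟩
  have he₁ := ell_nonneg α₁ γ₁ hη.le
  have he₂ := ell_nonneg α₂ γ₂ hη.le
  have hA₁C₁ : 0 ≤ A₁ * C₁ := by positivity
  have hA₂C₂ : 0 ≤ A₂ * C₂ := by positivity
  calc ∫ u in (0)..1, singularKernel α₁ α₂ γ₁ γ₂ η 1 u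
      ≤ A₁ * (∫ u in (0)..1, u ^ (-α₁) * min (η * u ^ (-γ₁)) 1)
        + A₂ * ∫ u in (0)..1, u ^ (-α₂) * min (η * u ^ (-γ₂)) 1 :=
        integral_singularKernel_one_le hα₁ hα₂ hγ₁ hγ₂ hη.le
    _ ≤ A₁ * (C₁ * ell α₁ γ₁ η) + A₂ * (C₂ * ell α₂ γ₂ η) := by
        gcongr
        exacts [h₁ η hη, h₂ η hη]
    _ ≤ (A₁ * C₁ + A₂ * C₂) * (ell α₁ γ₁ η + ell α₂ γ₂ η) := by nlinarith

end SingularKernel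

theorem singular_integral_estimate (α₁ α₂ γ₁ γ₂ : ℝ)
    (hα₁ : α₁ ∈ Set.Ico (0:ℝ) 1) (hα₂ : α₂ ∈ Set.Ico (0:ℝ) 1)
    (hγ₁ : 0 ≤ γ₁) (hγ₂ : 0 ≤ γ₂) :
    ∃ C : ℝ, 0 ≤ C ∧ ∀ t ε : ℝ, 0 < t → 0 < ε →
      (∫ s in Set.Ioo (0:ℝ) t,
          s ^ (-α₁) * (t - s) ^ (-α₂) * min (ε * s ^ (-γ₁) * (t - s) ^ (-γ₂)) 1)
        ≤ C * t ^ (1 - α₁ - α₂) *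
            (ell α₁ γ₁ (ε * t ^ (-(γ₁ + γ₂))) + ell α₂ γ₂ (ε * t ^ (-(γ₁ + γ₂)))) := by
  obtain ⟨C, hC, hbound⟩ := exists_integral_singularKernel_one_le hα₁ hα₂ hγ₁ hγ₂
  refine ⟨C, hC, fun t ε ht hε => ?_⟩
  calc ∫ s in Ioo 0 t, singularKernel α₁ α₂ γ₁ γ₂ ε t s
      = t ^ (1 - α₁ - α₂) *
          ∫ u in (0)..1, singularKernel α₁ α₂ γ₁ γ₂ (ε * t ^ (-(γ₁ + γ₂))) 1 u :=
        integral_singularKernel_eq ht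
    _ ≤ t ^ (1 - α₁ - α₂) * (C * (ell α₁ γ₁ (ε * t ^ (-(γ₁ + γ₂)))
          + ell α₂ γ₂ (ε * t ^ (-(γ₁ + γ₂))))) := by
        gcongr
        exact hbound _ (by positivity)
    _ = _ := by ring
end

section
/- Let α₁ ∈ [0,1), α₂ ∈ [0,1), γ > 1 - α₂. Then there is a constant C = C(α₁, α₂, γ) such that for all t > 0 and λ > 0, ∫₀ᵗ s^{-α₁} (t-s)^{-α₂} · min((λ(t-s))^{-γ}, 1) ds ≤ C · min(λ^{-1+α₂} t^{-α₁}, t^{1-α₁-α₂}). -/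
/-!
Write the integrand as `f s * g (t - s)` with `f s = s ^ (-α₁)` and
`g u = u ^ (-α₂) * min ((λ u) ^ (-γ)) 1`, both nonnegative and decreasing on `(0, ∞)`.
Bounding `g (t - s) ≤ g (t / 2)` on `(0, t / 2]` and `f s ≤ f (t / 2)` on `[t / 2, t)` leaves
`g c * ∫₀ᶜ f + f c * ∫₀ᶜ g` with `c = t / 2`. Both terms are controlled by
`c ^ (-α₁) * min (λ ^ (α₂ - 1)) (c ^ (1 - α₂))`: pointwise `c * g c` is at most that minimum,
and `∫₀ᶜ g` is at most a constant times it, the `λ`-bound because `γ > 1 - α₂` makes `g`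
integrable on `(0, ∞)`, where its integral scales like `λ ^ (α₂ - 1)`. Passing from `c = t / 2`
back to `t` costs at most a factor `2`.
-/

open MeasureTheory Set Real

section Convolution

variable {f g : ℝ → ℝ} {t : ℝ}

lemma mul_comp_sub_le_mul_half (hg : AntitoneOn g (Ioi 0)) (hf₀ : ∀ x ∈ Ioi 0, 0 ≤ f x)
    {s : ℝ} (hs : s ∈ Ioc 0 (t / 2)) : f s * g (t - s) ≤ g (t / 2) * f s := by
  have hts : t / 2 ≤ t - s := by linarith [hs.2]
  have hhalf : 0 < t / 2 := hs.1.trans_le hs.2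
  rw [mul_comm]
  exact mul_le_mul_of_nonneg_right (hg hhalf (hhalf.trans_le hts) hts) (hf₀ s hs.1)

lemma intervalIntegrable_mul_comp_sub_half (ht : 0 ≤ t) (hfc : ContinuousOn f (Ioi 0))
    (hgc : ContinuousOn g (Ioi 0)) (hf₀ : ∀ x ∈ Ioi 0, 0 ≤ f x) (hg₀ : ∀ x ∈ Ioi 0, 0 ≤ g x)
    (hg : AntitoneOn g (Ioi 0)) (hfi : IntervalIntegrable f volume 0 (t / 2)) :
    IntervalIntegrable (fun s => f s * g (t - s)) volume 0 (t / 2) := by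
  rw [intervalIntegrable_iff_integrableOn_Ioc_of_le (by positivity)] at hfi ⊢
  have hmaps : MapsTo (fun s => t - s) (Ioc 0 (t / 2)) (Ioi 0) := fun s hs => by
    simp only [mem_Ioi]; linarith [hs.1, hs.2]
  have hcont : ContinuousOn (fun s => f s * g (t - s)) (Ioc 0 (t / 2)) :=
    (hfc.mono fun s hs => hs.1).mul (hgc.comp (continuousOn_const.sub continuousOn_id) hmaps)
  refine (hfi.const_mul (g (t / 2))).mono' (hcont.aestronglyMeasurable measurableSet_Ioc) ?_
  refine (ae_restrict_iff' measurableSet_Ioc).2 (ae_of_all _ fun s hs => ?_)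
  rw [Real.norm_of_nonneg (mul_nonneg (hf₀ s hs.1) (hg₀ _ (hmaps hs)))]
  exact mul_comp_sub_le_mul_half hg hf₀ hs

lemma integral_mul_comp_sub_half_le (ht : 0 ≤ t) (hfc : ContinuousOn f (Ioi 0))
    (hgc : ContinuousOn g (Ioi 0)) (hf₀ : ∀ x ∈ Ioi 0, 0 ≤ f x) (hg₀ : ∀ x ∈ Ioi 0, 0 ≤ g x)
    (hg : AntitoneOn g (Ioi 0)) (hfi : IntervalIntegrable f volume 0 (t / 2)) :
    ∫ s in 0..t / 2, f s * g (t - s) ≤ g (t / 2) * ∫ s in 0..t / 2, f s := by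
  rw [← intervalIntegral.integral_const_mul]
  exact intervalIntegral.integral_mono_on_of_le_Ioo (by positivity)
    (intervalIntegrable_mul_comp_sub_half ht hfc hgc hf₀ hg₀ hg hfi) (hfi.const_mul _)
    fun s hs => mul_comp_sub_le_mul_half hg hf₀ (Ioo_subset_Ioc_self hs)

theorem integral_mul_comp_sub_le (ht : 0 ≤ t) (hfc : ContinuousOn f (Ioi 0))
    (hgc : ContinuousOn g (Ioi 0)) (hf₀ : ∀ x ∈ Ioi 0, 0 ≤ f x) (hg₀ : ∀ x ∈ Ioi 0, 0 ≤ g x)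
    (hf : AntitoneOn f (Ioi 0)) (hg : AntitoneOn g (Ioi 0))
    (hfi : IntervalIntegrable f volume 0 (t / 2)) (hgi : IntervalIntegrable g volume 0 (t / 2)) :
    ∫ s in 0..t, f s * g (t - s) ≤
      g (t / 2) * (∫ s in 0..t / 2, f s) + f (t / 2) * ∫ s in 0..t / 2, g s := by
  have hreflect : ∫ s in t / 2..t, f s * g (t - s) = ∫ s in 0..t / 2, g s * f (t - s) := by
    have := intervalIntegral.integral_comp_sub_left (fun s => f s * g (t - s)) (a := 0)
      (b := t / 2) t
    simp only [sub_sub_cancel, sub_half, sub_zero] at this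
    simp only [← this, mul_comm]
  have hi₂ : IntervalIntegrable (fun s => f s * g (t - s)) volume (t / 2) t := by
    have := (intervalIntegrable_mul_comp_sub_half ht hgc hfc hg₀ hf₀ hf hgi).comp_sub_left t
    simp only [sub_sub_cancel, sub_zero, sub_half, mul_comm] at this
    exact this.symm
  rw [← intervalIntegral.integral_add_adjacent_intervals
    (intervalIntegrable_mul_comp_sub_half ht hfc hgc hf₀ hg₀ hg hfi) hi₂, hreflect]
  exact add_le_add (integral_mul_comp_sub_half_le ht hfc hgc hf₀ hg₀ hg hfi)
    (integral_mul_comp_sub_half_le ht hgc hfc hg₀ hf₀ hf hgi)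

end Convolution

lemma min_rpow_neg_le_rpow_neg {x β γ : ℝ} (hx : 0 < x) (hβ : 0 ≤ β) (hβγ : β ≤ γ) :
    min (x ^ (-γ)) 1 ≤ x ^ (-β) := by
  rcases le_or_gt 1 x with h | h
  · exact (min_le_left _ _).trans (rpow_le_rpow_of_exponent_le h (by linarith))
  · exact (min_le_right _ _).trans (one_le_rpow_of_pos_of_le_one_of_nonpos hx h.le (by linarith))

noncomputable def dampedPowerKernel (α γ lam u : ℝ) : ℝ := u ^ (-α) * min ((lam * u) ^ (-γ)) 1

section DampedPowerKernel

variable {α γ lam u : ℝ}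

lemma dampedPowerKernel_nonneg (hlam : 0 ≤ lam) (hu : 0 ≤ u) : 0 ≤ dampedPowerKernel α γ lam u :=
  mul_nonneg (rpow_nonneg hu _) (le_min (rpow_nonneg (mul_nonneg hlam hu) _) zero_le_one)

lemma dampedPowerKernel_le_rpow (hu : 0 ≤ u) : dampedPowerKernel α γ lam u ≤ u ^ (-α) :=
  mul_le_of_le_one_right (rpow_nonneg hu _) (min_le_right _ _)

lemma dampedPowerKernel_le_mul_rpow (hlam : 0 ≤ lam) (hu : 0 < u) :
    dampedPowerKernel α γ lam u ≤ lam ^ (-γ) * u ^ (-(α + γ)) :=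
  calc dampedPowerKernel α γ lam u ≤ u ^ (-α) * (lam * u) ^ (-γ) :=
        mul_le_mul_of_nonneg_left (min_le_left _ _) (rpow_nonneg hu.le _)
    _ = lam ^ (-γ) * u ^ (-(α + γ)) := by
        rw [mul_rpow hlam hu.le, neg_add, rpow_add hu]; ring

lemma mul_dampedPowerKernel_le (hlam : 0 < lam) (hu : 0 < u) (hα : α ≤ 1) (hγ : 1 - α ≤ γ) :
    u * dampedPowerKernel α γ lam u ≤ min (lam ^ (-1 + α)) (u ^ (1 - α)) := by
  refine le_min ?_ ?_
  · have hmin : min ((lam * u) ^ (-γ)) 1 ≤ lam ^ (-1 + α) * u ^ (-1 + α) := by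
      rw [← mul_rpow hlam.le hu.le, show -1 + α = -(1 - α) by ring]
      exact min_rpow_neg_le_rpow_neg (by positivity) (by linarith) hγ
    have hu₁ : u * (u ^ (-α) * u ^ (-1 + α)) = 1 := by
      rw [← rpow_add hu, show -α + (-1 + α) = -1 by ring, rpow_neg_one, mul_inv_cancel₀ hu.ne']
    calc u * dampedPowerKernel α γ lam u
        ≤ u * (u ^ (-α) * (lam ^ (-1 + α) * u ^ (-1 + α))) := by
          unfold dampedPowerKernel; gcongr
      _ = lam ^ (-1 + α) := by linear_combination lam ^ (-1 + α) * hu₁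
  · calc u * dampedPowerKernel α γ lam u ≤ u * u ^ (-α) := by
          gcongr; exact dampedPowerKernel_le_rpow hu.le
      _ = u ^ (1 - α) := by rw [sub_eq_add_neg, rpow_add hu, rpow_one]

lemma continuousOn_dampedPowerKernel (hlam : 0 < lam) :
    ContinuousOn (dampedPowerKernel α γ lam) (Ioi 0) := by
  intro u hu
  have hu₀ : u ≠ 0 := ne_of_gt hu
  exact (continuousWithinAt_id.rpow_const (Or.inl hu₀)).mul
    (((continuousWithinAt_const.mul continuousWithinAt_id).rpow_const
      (Or.inl (mul_ne_zero hlam.ne' hu₀))).min continuousWithinAt_const)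

lemma antitoneOn_dampedPowerKernel (hlam : 0 < lam) (hα : 0 ≤ α) (hγ : 0 ≤ γ) :
    AntitoneOn (dampedPowerKernel α γ lam) (Ioi 0) := fun u hu v hv huv =>
  mul_le_mul (rpow_le_rpow_of_nonpos hu huv (by linarith))
    (min_le_min_right 1 (rpow_le_rpow_of_nonpos (mul_pos hlam hu)
      (mul_le_mul_of_nonneg_left huv hlam.le) (by linarith)))
    (le_min (rpow_nonneg (mul_pos hlam (hu.trans_le huv)).le _) zero_le_one) (rpow_nonneg hu.le _)

lemma integrableOn_dampedPowerKernel_of_le {s : Set ℝ} {b : ℝ → ℝ} (hlam : 0 < lam)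
    (hs : s ⊆ Ioi 0) (hms : MeasurableSet s) (hb : IntegrableOn b s)
    (hle : ∀ u ∈ s, dampedPowerKernel α γ lam u ≤ b u) :
    IntegrableOn (dampedPowerKernel α γ lam) s := by
  refine hb.mono' (((continuousOn_dampedPowerKernel hlam).mono hs).aestronglyMeasurable hms) ?_
  refine (ae_restrict_iff' hms).2 (ae_of_all _ fun u hu => ?_)
  rw [Real.norm_of_nonneg (dampedPowerKernel_nonneg hlam.le (hs hu).le)]
  exact hle u hu

lemma integrableOn_Ioi_dampedPowerKernel (hlam : 0 < lam) (hα : α < 1) (hγ : 1 - α < γ) :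
    IntegrableOn (dampedPowerKernel α γ lam) (Ioi 0) := by
  have ha : 0 < lam⁻¹ := inv_pos.2 hlam
  rw [← Ioc_union_Ioi_eq_Ioi ha.le]
  refine IntegrableOn.union ?_ ?_
  · refine integrableOn_dampedPowerKernel_of_le hlam Ioc_subset_Ioi_self measurableSet_Ioc ?_
      fun u hu => dampedPowerKernel_le_rpow hu.1.le
    exact (intervalIntegrable_iff_integrableOn_Ioc_of_le ha.le).1
      (intervalIntegral.intervalIntegrable_rpow' (by linarith))
  · exact integrableOn_dampedPowerKernel_of_le hlam (Ioi_subset_Ioi ha.le) measurableSet_Ioi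
      ((integrableOn_Ioi_rpow_of_lt (by linarith) ha).const_mul _)
      fun u hu => dampedPowerKernel_le_mul_rpow hlam.le (ha.trans hu)

lemma integral_Ioi_dampedPowerKernel_le (hlam : 0 < lam) (hα : α < 1) (hγ : 1 - α < γ) :
    ∫ u in Ioi 0, dampedPowerKernel α γ lam u ≤
      (1 / (1 - α) + 1 / (γ + α - 1)) * lam ^ (-1 + α) := by
  have ha : 0 < lam⁻¹ := inv_pos.2 hlam
  have hint := integrableOn_Ioi_dampedPowerKernel hlam hα hγ
  rw [← Ioc_union_Ioi_eq_Ioi ha.le, setIntegral_union (Ioc_disjoint_Ioi le_rfl) measurableSet_Ioi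
    (hint.mono_set Ioc_subset_Ioi_self) (hint.mono_set (Ioi_subset_Ioi ha.le))]
  have hnear : ∫ u in Ioc 0 lam⁻¹, dampedPowerKernel α γ lam u ≤ lam ^ (-1 + α) / (1 - α) := by
    calc ∫ u in Ioc 0 lam⁻¹, dampedPowerKernel α γ lam u ≤ ∫ u in Ioc 0 lam⁻¹, u ^ (-α) :=
          setIntegral_mono_on (hint.mono_set Ioc_subset_Ioi_self)
            ((intervalIntegrable_iff_integrableOn_Ioc_of_le ha.le).1
              (intervalIntegral.intervalIntegrable_rpow' (by linarith)))
            measurableSet_Ioc fun u hu => dampedPowerKernel_le_rpow hu.1.le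
      _ = lam ^ (-1 + α) / (1 - α) := by
          rw [← intervalIntegral.integral_of_le ha.le, integral_rpow (Or.inl (by linarith)),
            zero_rpow (by linarith), sub_zero, inv_rpow hlam.le, ← rpow_neg hlam.le]
          ring_nf
  have hfar : ∫ u in Ioi lam⁻¹, dampedPowerKernel α γ lam u ≤ lam ^ (-1 + α) / (γ + α - 1) := by
    calc ∫ u in Ioi lam⁻¹, dampedPowerKernel α γ lam u
        ≤ ∫ u in Ioi lam⁻¹, lam ^ (-γ) * u ^ (-(α + γ)) :=
          setIntegral_mono_on (hint.mono_set (Ioi_subset_Ioi ha.le))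
            ((integrableOn_Ioi_rpow_of_lt (by linarith) ha).const_mul _) measurableSet_Ioi
            fun u hu => dampedPowerKernel_le_mul_rpow hlam.le (ha.trans hu)
      _ = lam ^ (-1 + α) / (γ + α - 1) := by
          rw [integral_const_mul, integral_Ioi_rpow_of_lt (by linarith) ha, inv_rpow hlam.le,
            ← rpow_neg hlam.le, neg_div, ← div_neg, mul_div_assoc', ← rpow_add hlam]
          ring_nf
  calc _ ≤ lam ^ (-1 + α) / (1 - α) + lam ^ (-1 + α) / (γ + α - 1) := add_le_add hnear hfar
    _ = _ := by ring

lemma integral_dampedPowerKernel_le {c : ℝ} (hlam : 0 < lam) (hα : α < 1) (hγ : 1 - α < γ)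
    (hc : 0 ≤ c) :
    ∫ u in 0..c, dampedPowerKernel α γ lam u ≤
      (1 / (1 - α) + 1 / (γ + α - 1)) * min (lam ^ (-1 + α)) (c ^ (1 - α)) := by
  have hint := integrableOn_Ioi_dampedPowerKernel hlam hα hγ
  have hγ' : 0 < γ + α - 1 := by linarith
  rw [mul_min_of_nonneg _ _ (by positivity)]
  refine le_min ?_ ?_
  · rw [intervalIntegral.integral_of_le hc]
    refine (setIntegral_mono_set hint ?_ Ioc_subset_Ioi_self.eventuallyLE).trans
      (integral_Ioi_dampedPowerKernel_le hlam hα hγ)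
    exact (ae_restrict_iff' measurableSet_Ioi).2
      (ae_of_all _ fun u hu => dampedPowerKernel_nonneg hlam.le (le_of_lt hu))
  · calc ∫ u in 0..c, dampedPowerKernel α γ lam u ≤ ∫ u in 0..c, u ^ (-α) :=
          intervalIntegral.integral_mono_on hc
            ((intervalIntegrable_iff_integrableOn_Ioc_of_le hc).2
              (hint.mono_set Ioc_subset_Ioi_self))
            (intervalIntegral.intervalIntegrable_rpow' (by linarith))
            fun u hu => dampedPowerKernel_le_rpow hu.1
      _ = 1 / (1 - α) * c ^ (1 - α) := by
          rw [integral_rpow (Or.inl (by linarith)), zero_rpow (by linarith), sub_zero]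
          ring_nf
      _ ≤ _ := by gcongr; linarith [one_div_pos.2 hγ']

end DampedPowerKernel

lemma half_rpow_neg_le {t a : ℝ} (ht : 0 < t) (ha : a ≤ 1) : (t / 2) ^ (-a) ≤ 2 * t ^ (-a) := by
  rw [div_rpow ht.le zero_le_two, rpow_neg zero_le_two, div_inv_eq_mul, mul_comm]
  gcongr
  calc (2 : ℝ) ^ a ≤ 2 ^ (1 : ℝ) := rpow_le_rpow_of_exponent_le one_le_two ha
    _ = 2 := rpow_one 2

lemma half_rpow_neg_mul_min_le {t L α₁ α₂ : ℝ} (ht : 0 < t) (hL : 0 ≤ L) (hα₁ : α₁ ≤ 1)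
    (hα₂ : α₂ ≤ 1) :
    (t / 2) ^ (-α₁) * min L ((t / 2) ^ (1 - α₂)) ≤ 2 * min (L * t ^ (-α₁)) (t ^ (1 - α₁ - α₂)) := by
  have hsum : t ^ (-α₁) * t ^ (1 - α₂) = t ^ (1 - α₁ - α₂) := by
    rw [← rpow_add ht]; ring_nf
  calc (t / 2) ^ (-α₁) * min L ((t / 2) ^ (1 - α₂)) ≤ 2 * t ^ (-α₁) * min L (t ^ (1 - α₂)) := by
        refine mul_le_mul (half_rpow_neg_le ht hα₁) (min_le_min_left L ?_)
          (le_min hL (by positivity)) (by positivity)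
        exact rpow_le_rpow (by positivity) (by linarith) (by linarith)
    _ = 2 * min (L * t ^ (-α₁)) (t ^ (1 - α₁ - α₂)) := by
        rw [mul_assoc, mul_min_of_nonneg _ _ (by positivity), hsum, mul_comm (t ^ _) L]

theorem integral_rpow_mul_dampedPowerKernel_le {α₁ α₂ γ t lam : ℝ} (hα₁₀ : 0 ≤ α₁)
    (hα₁ : α₁ < 1) (hα₂₀ : 0 ≤ α₂) (hα₂ : α₂ < 1) (hγ : 1 - α₂ < γ) (ht : 0 < t)
    (hlam : 0 < lam) :
    ∫ s in 0..t, s ^ (-α₁) * dampedPowerKernel α₂ γ lam (t - s) ≤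
      2 * (1 / (1 - α₁) + (1 / (1 - α₂) + 1 / (γ + α₂ - 1))) *
        min (lam ^ (-1 + α₂) * t ^ (-α₁)) (t ^ (1 - α₁ - α₂)) := by
  set c := t / 2
  have hc : 0 < c := by positivity
  set M := min (lam ^ (-1 + α₂)) (c ^ (1 - α₂))
  set K := 1 / (1 - α₂) + 1 / (γ + α₂ - 1)
  have hγ' : 0 < γ + α₂ - 1 := by linarith
  have hf_cont : ContinuousOn (fun s : ℝ => s ^ (-α₁)) (Ioi 0) := fun x hx =>
    (continuousAt_id.rpow_const (Or.inl (ne_of_gt hx))).continuousWithinAt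
  have hf_anti : AntitoneOn (fun s : ℝ => s ^ (-α₁)) (Ioi 0) := fun x hx y _ hxy =>
    rpow_le_rpow_of_nonpos hx hxy (by linarith)
  have hconv := integral_mul_comp_sub_le ht.le hf_cont (continuousOn_dampedPowerKernel hlam)
    (fun x hx => rpow_nonneg (le_of_lt hx) _)
    (fun x hx => dampedPowerKernel_nonneg hlam.le (le_of_lt hx))
    hf_anti (antitoneOn_dampedPowerKernel hlam hα₂₀ (by linarith))
    (intervalIntegral.intervalIntegrable_rpow' (by linarith))
    ((intervalIntegrable_iff_integrableOn_Ioc_of_le hc.le).2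
      ((integrableOn_Ioi_dampedPowerKernel hlam hα₂ hγ).mono_set Ioc_subset_Ioi_self))
  have hpow : ∫ s in 0..c, s ^ (-α₁) = c ^ (-α₁) * c / (1 - α₁) := by
    rw [integral_rpow (Or.inl (by linarith)), zero_rpow (by linarith), sub_zero,
      rpow_add_one hc.ne']
    ring_nf
  have hkc : c * dampedPowerKernel α₂ γ lam c ≤ M :=
    mul_dampedPowerKernel_le hlam hc hα₂.le hγ.le
  have hkint : ∫ u in 0..c, dampedPowerKernel α₂ γ lam u ≤ K * M :=
    integral_dampedPowerKernel_le hlam hα₂ hγ hc.le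
  have hcM : c ^ (-α₁) * M ≤ 2 * min (lam ^ (-1 + α₂) * t ^ (-α₁)) (t ^ (1 - α₁ - α₂)) :=
    half_rpow_neg_mul_min_le ht (by positivity) hα₁.le hα₂.le
  calc ∫ s in 0..t, s ^ (-α₁) * dampedPowerKernel α₂ γ lam (t - s)
      ≤ dampedPowerKernel α₂ γ lam c * (c ^ (-α₁) * c / (1 - α₁)) +
          c ^ (-α₁) * ∫ u in 0..c, dampedPowerKernel α₂ γ lam u := by
        rw [← hpow]; exact hconv
    _ = c ^ (-α₁) * (c * dampedPowerKernel α₂ γ lam c) / (1 - α₁) +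
          c ^ (-α₁) * ∫ u in 0..c, dampedPowerKernel α₂ γ lam u := by ring
    _ ≤ c ^ (-α₁) * M / (1 - α₁) + c ^ (-α₁) * (K * M) := by gcongr
    _ = (1 / (1 - α₁) + K) * (c ^ (-α₁) * M) := by ring
    _ ≤ (1 / (1 - α₁) + K) * (2 * min (lam ^ (-1 + α₂) * t ^ (-α₁)) (t ^ (1 - α₁ - α₂))) := by
        gcongr
    _ = _ := by ring

theorem singular_integral_estimate_special (α₁ α₂ γ : ℝ)
    (hα₁ : α₁ ∈ Set.Ico (0:ℝ) 1) (hα₂ : α₂ ∈ Set.Ico (0:ℝ) 1)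
    (hγ : 1 - α₂ < γ) :
    ∃ C : ℝ, 0 ≤ C ∧ ∀ t lam : ℝ, 0 < t → 0 < lam →
      (∫ s in Set.Ioo (0:ℝ) t,
          s ^ (-α₁) * (t - s) ^ (-α₂) * min ((lam * (t - s)) ^ (-γ)) 1)
        ≤ C * min (lam ^ (-1 + α₂) * t ^ (-α₁)) (t ^ (1 - α₁ - α₂)) := by
  obtain ⟨hα₁₀, hα₁⟩ := hα₁
  obtain ⟨hα₂₀, hα₂⟩ := hα₂
  have hγ' : 0 < γ + α₂ - 1 := by linarith
  refine ⟨2 * (1 / (1 - α₁) + (1 / (1 - α₂) + 1 / (γ + α₂ - 1))), by positivity,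
    fun t lam ht hlam => ?_⟩
  rw [← integral_Ioc_eq_integral_Ioo, ← intervalIntegral.integral_of_le ht.le]
  simpa only [dampedPowerKernel, ← mul_assoc] using
    integral_rpow_mul_dampedPowerKernel_le hα₁₀ hα₁ hα₂₀ hα₂ hγ ht hlam
end

section
/- Let d ≥ 1 and for t > 0 let g_t(x,v) = (π² t⁴/3)^{-d/2} exp(−(3|x|² + |3x − 2tv|²)/(2t³)) be a probability density on ℝ^d × ℝ^d. For p = (p_x, p_v) ∈ [1,∞]², define the mixed norm ‖f‖_p = (∫_{ℝ^d} (∫_{ℝ^d} |f(x,v)|^{p_x} dx)^{p_v/p_x} dv)^{1/p_v}. Then there exists a constant C₁ = C₁(d, p) such that for every t ∈ (0,1], ‖g_t‖_p ≤ C₁ · t^{−(d/2)(3(1−1/p_x) + (1−1/p_v))}. -/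
open MeasureTheory Real ENNReal

/-- The mixed Lebesgue norm ‖f‖_{(p_x,p_v)} on ℝ^d × ℝ^d:
    the L^{p_x} norm in x followed by the L^{p_v} norm in v. -/
noncomputable def mixedNorm (d : ℕ) (px pv : ℝ≥0∞)
    (f : EuclideanSpace ℝ (Fin d) × EuclideanSpace ℝ (Fin d) → ℝ) : ℝ≥0∞ :=
  eLpNorm (fun v => (eLpNorm (fun x => f (x, v)) px volume).toReal) pv volume

/-- The Gaussian density g_t of (∫₀ᵗ W_s ds, W_t). -/
noncomputable def kineticGauss (d : ℕ) (t : ℝ)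
    (x v : EuclideanSpace ℝ (Fin d)) : ℝ :=
  (π ^ 2 * t ^ 4 / 3) ^ (-(d : ℝ) / 2) *
    Real.exp (-(3 * ‖x‖ ^ 2 + ‖(3:ℝ) • x - (2 * t) • v‖ ^ 2) / (2 * t ^ 3))

/-!
By Cauchy–Schwarz, `3‖x‖² + ‖3x − 2tv‖² ≥ (‖x‖² + t²‖v‖²)/2`, so `g_t(x, v)` is dominated by
`(π²t⁴/3)^(-d/2) · exp(−‖x‖²/(4t³)) · exp(−‖v‖²/(4t))`, a product of a Gaussian in `x` and one
in `v`. The mixed norm of such a product is the product of the two Lebesgue norms, and the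
`L^p` norm of `exp(−b‖x‖²)` is explicit; collecting the powers of `t` gives the exponent.
-/

section Gaussian

variable {V : Type*} [NormedAddCommGroup V] [InnerProductSpace ℝ V] [FiniteDimensional ℝ V]
  [MeasurableSpace V] [BorelSpace V]

lemma integrable_rexp_neg_mul_sq_norm {b : ℝ} (hb : 0 < b) :
    Integrable (fun x : V => rexp (-b * ‖x‖ ^ 2)) :=
  .of_integral_ne_zero (by rw [GaussianFourier.integral_rexp_neg_mul_sq_norm hb]; positivity)

lemma eLpNorm_rexp_neg_mul_sq_norm {b : ℝ} (hb : 0 < b) {p : ℝ≥0∞} (hp0 : p ≠ 0)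
    (hp : p ≠ ∞) :
    eLpNorm (fun x : V => rexp (-b * ‖x‖ ^ 2)) p volume
      = ENNReal.ofReal ((π / (p.toReal * b)) ^ (Module.finrank ℝ V / 2 * (1 / p.toReal))) := by
  have hq : 0 < p.toReal := ENNReal.toReal_pos hp0 hp
  have hpow : ∀ x : V, ‖rexp (-b * ‖x‖ ^ 2)‖ₑ ^ p.toReal
      = ENNReal.ofReal (rexp (-(p.toReal * b) * ‖x‖ ^ 2)) := fun x => by
    rw [Real.enorm_eq_ofReal (exp_nonneg _), ENNReal.ofReal_rpow_of_nonneg (exp_nonneg _) hq.le,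
      ← exp_mul]
    ring_nf
  rw [eLpNorm_eq_lintegral_rpow_enorm_toReal hp0 hp, lintegral_congr fun x => hpow x,
    ← ofReal_integral_eq_lintegral_ofReal (integrable_rexp_neg_mul_sq_norm (by positivity))
      (.of_forall fun _ => exp_nonneg _),
    GaussianFourier.integral_rexp_neg_mul_sq_norm (by positivity),
    ENNReal.ofReal_rpow_of_nonneg (by positivity) (by positivity), ← rpow_mul (by positivity)]

lemma eLpNorm_rexp_neg_mul_sq_norm_le {b : ℝ} (hb : 0 < b) {p : ℝ≥0∞} (hp : 1 ≤ p) :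
    eLpNorm (fun x : V => rexp (-b * ‖x‖ ^ 2)) p volume
      ≤ ENNReal.ofReal ((π / b) ^ (Module.finrank ℝ V / 2 * (1 / p).toReal)) := by
  rcases eq_or_ne p ∞ with rfl | hp_top
  · rw [eLpNorm_exponent_top]
    refine (eLpNormEssSup_le_of_ae_bound (C := 1) ?_).trans (by simp)
    filter_upwards with x
    rw [norm_of_nonneg (exp_nonneg _), exp_le_one_iff]
    nlinarith [sq_nonneg ‖x‖]
  have hq : 1 ≤ p.toReal := by simpa using ENNReal.toReal_mono hp_top hp
  rw [eLpNorm_rexp_neg_mul_sq_norm hb (one_pos.trans_le hp).ne' hp_top, one_div p,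
    ENNReal.toReal_inv, ← one_div]
  gcongr
  exact le_mul_of_one_le_left hb.le hq

end Gaussian

lemma norm_sq_add_norm_sq_le_three_mul_add_norm_sub_sq {V : Type*} [NormedAddCommGroup V]
    [InnerProductSpace ℝ V] (x w : V) :
    ‖x‖ ^ 2 + ‖w‖ ^ 2 ≤ 2 * (3 * ‖x‖ ^ 2 + ‖(3:ℝ) • x - (2:ℝ) • w‖ ^ 2) := by
  rw [norm_sub_sq_real, norm_smul, norm_smul, real_inner_smul_left, real_inner_smul_right,
    Real.norm_ofNat, Real.norm_ofNat]
  have hxw := real_inner_le_norm x w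
  -- `23a² − 24ab + 7b² ≥ 0` since `12² < 23 · 7`
  nlinarith [sq_nonneg (23 * ‖x‖ - 12 * ‖w‖)]

lemma mixedNorm_le_of_norm_le_mul {d : ℕ} {px pv : ℝ≥0∞}
    {f : EuclideanSpace ℝ (Fin d) × EuclideanSpace ℝ (Fin d) → ℝ}
    {g h : EuclideanSpace ℝ (Fin d) → ℝ} {A Bg Bh : ℝ} (hA : 0 ≤ A) (hBg : 0 ≤ Bg)
    (hf : ∀ x v, ‖f (x, v)‖ ≤ A * (‖g x‖ * ‖h v‖))
    (hg : eLpNorm g px volume ≤ ENNReal.ofReal Bg)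
    (hh : eLpNorm h pv volume ≤ ENNReal.ofReal Bh) :
    mixedNorm d px pv f ≤ ENNReal.ofReal (A * (Bg * Bh)) := by
  have h_slice : ∀ v, (eLpNorm (fun x => f (x, v)) px volume).toReal ≤ A * Bg * ‖h v‖ := by
    intro v
    refine ENNReal.toReal_le_of_le_ofReal (by positivity) ?_
    calc eLpNorm (fun x => f (x, v)) px volume
        ≤ ENNReal.ofReal (A * ‖h v‖) * eLpNorm g px volume :=
          eLpNorm_le_mul_eLpNorm_of_ae_le_mul (.of_forall fun x => by linarith [hf x v]) px
      _ ≤ ENNReal.ofReal (A * ‖h v‖) * ENNReal.ofReal Bg := by gcongr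
      _ = ENNReal.ofReal (A * Bg * ‖h v‖) := by rw [← ENNReal.ofReal_mul (by positivity)]; ring_nf
  calc mixedNorm d px pv f
      ≤ ENNReal.ofReal (A * Bg) * eLpNorm h pv volume :=
        eLpNorm_le_mul_eLpNorm_of_ae_le_mul
          (.of_forall fun v => by rw [norm_of_nonneg ENNReal.toReal_nonneg]; exact h_slice v) pv
    _ ≤ ENNReal.ofReal (A * Bg) * ENNReal.ofReal Bh := by gcongr
    _ = ENNReal.ofReal (A * (Bg * Bh)) := by rw [← ENNReal.ofReal_mul (by positivity), mul_assoc]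

lemma kineticGauss_nonneg (d : ℕ) (t : ℝ) (x v : EuclideanSpace ℝ (Fin d)) :
    0 ≤ kineticGauss d t x v := by
  unfold kineticGauss
  positivity

lemma kineticGauss_le {d : ℕ} {t : ℝ} (ht : 0 < t) (x v : EuclideanSpace ℝ (Fin d)) :
    kineticGauss d t x v ≤ (π ^ 2 * t ^ 4 / 3) ^ (-(d : ℝ) / 2) *
      (rexp (-(4 * t ^ 3)⁻¹ * ‖x‖ ^ 2) * rexp (-(4 * t)⁻¹ * ‖v‖ ^ 2)) := by
  unfold kineticGauss
  gcongr
  rw [← exp_add, exp_le_exp]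
  have h := norm_sq_add_norm_sq_le_three_mul_add_norm_sub_sq x (t • v)
  rw [smul_smul, norm_smul, norm_of_nonneg ht.le] at h
  rw [div_le_iff₀ (by positivity)]
  field_simp
  nlinarith

lemma toReal_one_sub_one_div {p : ℝ≥0∞} (hp : 1 ≤ p) :
    (1 - 1 / p).toReal = 1 - (1 / p).toReal := by
  rw [ENNReal.toReal_sub_of_le (by simpa using ENNReal.inv_le_one.mpr hp) one_ne_top,
    ENNReal.toReal_one]

lemma kineticGauss_bound_scaling {t : ℝ} (ht : 0 < t) (d qx qv : ℝ) :
    (π ^ 2 * t ^ 4 / 3) ^ (-d / 2) *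
        ((π / (4 * t ^ 3)⁻¹) ^ (d / 2 * qx) * (π / (4 * t)⁻¹) ^ (d / 2 * qv))
      = (π ^ 2 / 3) ^ (-d / 2) * ((4 * π) ^ (d / 2 * qx) * (4 * π) ^ (d / 2 * qv)) *
          t ^ (-(d / 2) * (3 * (1 - qx) + (1 - qv))) := by
  have hsplit : ∀ (c : ℝ) (n : ℕ) (y : ℝ), 0 ≤ c → (c * t ^ n) ^ y = c ^ y * t ^ (n * y) :=
    fun c n y hc => by rw [mul_rpow hc (by positivity), rpow_natCast_mul ht.le]
  rw [div_inv_eq_mul, div_inv_eq_mul, show π * (4 * t ^ 3) = 4 * π * t ^ 3 by ring,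
    show π * (4 * t) = 4 * π * t ^ 1 by ring, show π ^ 2 * t ^ 4 / 3 = π ^ 2 / 3 * t ^ 4 by ring,
    hsplit _ _ _ (by positivity), hsplit _ _ _ (by positivity), hsplit _ _ _ (by positivity),
    show -(d / 2) * (3 * (1 - qx) + (1 - qv))
      = ((4 : ℕ) : ℝ) * (-d / 2) + (((3 : ℕ) : ℝ) * (d / 2 * qx) + ((1 : ℕ) : ℝ) * (d / 2 * qv))
      by push_cast; ring,
    rpow_add ht, rpow_add ht]
  ring

/-- Mixed-norm estimate for the kinetic Gaussian density:
    ‖g_t‖_p ≤ C t^{−(d/2)(3(1−1/p_x)+(1−1/p_v))} for t ∈ (0,1]. -/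
theorem kineticGauss_mixedNorm_bound (d : ℕ) (px pv : ℝ≥0∞)
    (hpx : 1 ≤ px) (hpv : 1 ≤ pv) :
    ∃ C : ℝ, 0 ≤ C ∧ ∀ t : ℝ, t ∈ Set.Ioc (0:ℝ) 1 →
      mixedNorm d px pv (fun z => kineticGauss d t z.1 z.2)
        ≤ ENNReal.ofReal
            (C * t ^ (-((d : ℝ) / 2) *
              (3 * (1 - 1 / px).toReal + (1 - 1 / pv).toReal))) := by
  refine ⟨(π ^ 2 / 3) ^ (-(d : ℝ) / 2) *
    ((4 * π) ^ ((d : ℝ) / 2 * (1 / px).toReal) * (4 * π) ^ ((d : ℝ) / 2 * (1 / pv).toReal)),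
    by positivity, ?_⟩
  rintro t ⟨ht, -⟩
  have hgauss : ∀ b : ℝ, 0 < b → ∀ p : ℝ≥0∞, 1 ≤ p →
      eLpNorm (fun x : EuclideanSpace ℝ (Fin d) => rexp (-b * ‖x‖ ^ 2)) p volume
        ≤ ENNReal.ofReal ((π / b) ^ ((d : ℝ) / 2 * (1 / p).toReal)) := fun b hb p hp => by
    have h := eLpNorm_rexp_neg_mul_sq_norm_le (V := EuclideanSpace ℝ (Fin d)) hb hp
    rwa [finrank_euclideanSpace_fin] at h
  calc mixedNorm d px pv (fun z => kineticGauss d t z.1 z.2)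
      ≤ ENNReal.ofReal ((π ^ 2 * t ^ 4 / 3) ^ (-(d : ℝ) / 2) *
          ((π / (4 * t ^ 3)⁻¹) ^ ((d : ℝ) / 2 * (1 / px).toReal) *
            (π / (4 * t)⁻¹) ^ ((d : ℝ) / 2 * (1 / pv).toReal))) :=
        mixedNorm_le_of_norm_le_mul (by positivity) (by positivity)
          (fun x v => by
            simpa only [norm_of_nonneg (exp_nonneg _), norm_of_nonneg (kineticGauss_nonneg ..)]
              using kineticGauss_le ht x v)
          (hgauss _ (by positivity) px hpx) (hgauss _ (by positivity) pv hpv)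
    _ = _ := by rw [kineticGauss_bound_scaling ht, toReal_one_sub_one_div hpx,
      toReal_one_sub_one_div hpv]
end

section
/- Let f ∈ 𝕃^r(ℝ^{2d}) with r = (r_x, r_v) ∈ (1,∞)², f ≠ 0, and define g(x,v) = ‖f‖_r^{1−r_v} · 1_{(‖f(·,v)‖_{r_x} > 0)} · ‖f(·,v)‖_{r_x}^{r_v−r_x} · |f(x,v)|^{r_x−1} · sgn(f(x,v)). Then ∫ f(z) g(z) dz = ‖f‖_r and ‖g‖_{r'} ≤ 1, where r' is the Hölder conjugate exponent pair of r. -/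
/-!
For `h : α → ℝ` let `g_h = ‖h‖_p^{1-p} |h|^{p-1} sgn h` (`lpDual`). Then
`h g_h = ‖h‖_p^{1-p} |h|^p ≥ 0`, so `∫ h g_h = ‖h‖_p`, and `‖g_h‖_{p'} ≤ ‖h‖_p^{1-p} ‖h‖_p^{p-1} ≤ 1`.
With `N v = ‖f(·,v)‖_{r_x}` (`sliceNorm`), splitting `N^{r_v-r_x} = N^{r_v-1} N^{1-r_x}` factors
the dual element as `g(x,v) = g_N(v) · g_{f(·,v)}(x)`. Tonelli, applicable as the integrand is
nonnegative, gives `∫∫ f g = ∫ N g_N = ‖N‖_{r_v} = ‖f‖_r`; and `‖g(·,v)‖_{r_x'} ≤ g_N(v)`, whose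
`r_v'`-norm is at most one.
-/

open MeasureTheory ENNReal

/-- The explicit dual element of f in the mixed Lebesgue space:
    g(x,v) = ‖f‖_r^{1-r_v} 1_{‖f(·,v)‖_{r_x}>0} ‖f(·,v)‖_{r_x}^{r_v-r_x} |f(x,v)|^{r_x-1} sgn f(x,v). -/
noncomputable def dualElement (d : ℕ) (rx rv : ℝ)
    (f : EuclideanSpace ℝ (Fin d) × EuclideanSpace ℝ (Fin d) → ℝ)
    (z : EuclideanSpace ℝ (Fin d) × EuclideanSpace ℝ (Fin d)) : ℝ :=
  (mixedNorm d (ENNReal.ofReal rx) (ENNReal.ofReal rv) f).toReal ^ (1 - rv) *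
    (if 0 < (eLpNorm (fun x => f (x, z.2)) (ENNReal.ofReal rx) volume).toReal then
        (eLpNorm (fun x => f (x, z.2)) (ENNReal.ofReal rx) volume).toReal ^ (rv - rx) *
          |f z| ^ (rx - 1) * Real.sign (f z)
      else 0)

theorem Real.measurable_sign : Measurable Real.sign :=
  Measurable.ite (measurableSet_lt measurable_id measurable_const) measurable_const
    (Measurable.ite (measurableSet_lt measurable_const measurable_id) measurable_const
      measurable_const)

theorem Real.sign_mul_self (t : ℝ) : Real.sign t * t = |t| := by
  rcases lt_trichotomy t 0 with ht | rfl | ht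
  · rw [Real.sign_of_neg ht, abs_of_neg ht, neg_one_mul]
  · simp
  · rw [Real.sign_of_pos ht, abs_of_pos ht, one_mul]

theorem Real.abs_sign_le_one (t : ℝ) : |Real.sign t| ≤ 1 := by
  rcases Real.sign_apply_eq t with h | h | h <;> simp [h]

section LpDual

variable {α : Type*} [MeasurableSpace α] (μ : Measure α) (p : ℝ) (h : α → ℝ)

/-- When `‖h‖_p` is `0` or `∞` its `toReal` is `0`, and then `lpDual` vanishes
as `0 ^ (1 - p) = 0`. -/
noncomputable def lpDual (x : α) : ℝ :=
  (eLpNorm h (ENNReal.ofReal p) μ).toReal ^ (1 - p) * (|h x| ^ (p - 1) * Real.sign (h x))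

variable {p h}

theorem lpDual_nonneg {x : α} (hx : 0 ≤ h x) : 0 ≤ lpDual μ p h x := by
  have hsign : 0 ≤ Real.sign (h x) := by
    rcases hx.eq_or_lt with hx | hx
    · rw [← hx, Real.sign_zero]
    · rw [Real.sign_of_pos hx]; exact zero_le_one
  unfold lpDual
  positivity

theorem mul_lpDual (hp : p ≠ 0) (x : α) :
    h x * lpDual μ p h x = (eLpNorm h (ENNReal.ofReal p) μ).toReal ^ (1 - p) * |h x| ^ p := by
  have habs : |h x| ^ (p - 1) * |h x| = |h x| ^ p := by
    rw [← Real.rpow_add_one' (abs_nonneg _) (by simpa using hp), sub_add_cancel]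
  rw [lpDual, ← habs, ← Real.sign_mul_self]
  ring

theorem mul_lpDual_nonneg (x : α) : 0 ≤ h x * lpDual μ p h x := by
  have hsign := Real.sign_mul_nonneg (h x)
  calc 0 ≤ (eLpNorm h (ENNReal.ofReal p) μ).toReal ^ (1 - p) * |h x| ^ (p - 1)
        * (Real.sign (h x) * h x) := by positivity
    _ = h x * lpDual μ p h x := by rw [lpDual]; ring

theorem lintegral_ofReal_mul_lpDual (hp : 1 < p) :
    ∫⁻ x, ENNReal.ofReal (h x * lpDual μ p h x) ∂μ
      = ENNReal.ofReal (eLpNorm h (ENNReal.ofReal p) μ).toReal := by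
  have hp0 : 0 < p := zero_lt_one.trans hp
  have hn : ∫⁻ x, ‖h x‖ₑ ^ p ∂μ = eLpNorm h (ENNReal.ofReal p) μ ^ p := by
    rw [lintegral_rpow_enorm_eq_rpow_eLpNorm' hp0, eLpNorm_eq_eLpNorm' (by simpa using hp0)
      ofReal_ne_top, toReal_ofReal hp0.le]
  simp_rw [mul_lpDual μ hp0.ne', ofReal_mul (Real.rpow_nonneg toReal_nonneg _),
    ← ofReal_rpow_of_nonneg (abs_nonneg _) hp0.le, ← Real.enorm_eq_ofReal_abs]
  rw [lintegral_const_mul' _ _ ofReal_ne_top, hn]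
  rcases eq_or_ne (eLpNorm h (ENNReal.ofReal p) μ) ⊤ with htop | htop
  · rw [htop, toReal_top, Real.zero_rpow (by linarith), ofReal_zero, zero_mul]
  · have hpow : eLpNorm h (ENNReal.ofReal p) μ ^ p
        = ENNReal.ofReal ((eLpNorm h (ENNReal.ofReal p) μ).toReal ^ p) := by
      rw [← ofReal_rpow_of_nonneg toReal_nonneg hp0.le, ofReal_toReal htop]
    rw [hpow, ← ofReal_mul (Real.rpow_nonneg toReal_nonneg _),
      ← Real.rpow_add' toReal_nonneg (by simp), sub_add_cancel, Real.rpow_one]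

theorem eLpNorm_lpDual_le_one (hp : 1 < p) :
    eLpNorm (lpDual μ p h) (ENNReal.ofReal (p / (p - 1))) μ ≤ 1 := by
  have hp1 : 0 < p - 1 := sub_pos.mpr hp
  have hconj : ENNReal.ofReal (p / (p - 1)) * ENNReal.ofReal (p - 1) = ENNReal.ofReal p := by
    rw [← ofReal_mul (div_nonneg (by linarith) hp1.le), div_mul_cancel₀ _ hp1.ne']
  have hpow : eLpNorm (fun x => |h x| ^ (p - 1) * Real.sign (h x))
      (ENNReal.ofReal (p / (p - 1))) μ ≤ eLpNorm h (ENNReal.ofReal p) μ ^ (p - 1) := by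
    rw [← hconj, ← eLpNorm_norm_rpow _ hp1]
    refine eLpNorm_mono fun x => ?_
    rw [norm_mul, Real.norm_rpow_of_nonneg (norm_nonneg _), norm_norm, Real.norm_eq_abs (|h x| ^ _),
      abs_of_nonneg (Real.rpow_nonneg (abs_nonneg _) _), Real.norm_eq_abs]
    exact mul_le_of_le_one_right (Real.rpow_nonneg (abs_nonneg _) _) (Real.abs_sign_le_one _)
  have hsmul : lpDual μ p h = (eLpNorm h (ENNReal.ofReal p) μ).toReal ^ (1 - p) •
      fun x => |h x| ^ (p - 1) * Real.sign (h x) := rfl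
  rw [hsmul, eLpNorm_const_smul]
  calc _ ≤ ‖(eLpNorm h (ENNReal.ofReal p) μ).toReal ^ (1 - p)‖ₑ
        * eLpNorm h (ENNReal.ofReal p) μ ^ (p - 1) := by gcongr
    _ ≤ 1 := by
      rcases eq_or_ne (eLpNorm h (ENNReal.ofReal p) μ) ⊤ with htop | htop
      · simp [htop, Real.zero_rpow (by linarith : 1 - p ≠ 0)]
      have hpow : eLpNorm h (ENNReal.ofReal p) μ ^ (p - 1)
          = ENNReal.ofReal ((eLpNorm h (ENNReal.ofReal p) μ).toReal ^ (p - 1)) := by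
        rw [← ofReal_rpow_of_nonneg toReal_nonneg hp1.le, ofReal_toReal htop]
      rw [hpow, Real.enorm_of_nonneg (Real.rpow_nonneg toReal_nonneg _),
        ← ofReal_mul (Real.rpow_nonneg toReal_nonneg _), ofReal_le_one,
        show 1 - p = -(p - 1) by ring, Real.rpow_neg toReal_nonneg]
      exact inv_mul_le_one_of_le₀ le_rfl (Real.rpow_nonneg toReal_nonneg _)

end LpDual

section SliceNorm

variable {α β E : Type*} [MeasurableSpace α] [MeasurableSpace β] [NormedAddCommGroup E]

noncomputable def sliceNorm (μ : Measure α) (p : ℝ≥0∞) (f : α × β → E) (v : β) : ℝ :=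
  (eLpNorm (fun x => f (x, v)) p μ).toReal

theorem measurable_sliceNorm [MeasurableSpace E] [OpensMeasurableSpace E] {μ : Measure α}
    [SFinite μ] {p : ℝ≥0∞} (hp : p ≠ ∞) {f : α × β → E} (hf : Measurable f) :
    Measurable (sliceNorm μ p f) := by
  refine Measurable.ennreal_toReal ?_
  rcases eq_or_ne p 0 with rfl | hp0
  · simp
  simp_rw [eLpNorm_eq_lintegral_rpow_enorm_toReal hp0 hp]
  exact (Measurable.lintegral_prod_left' (f := fun z => ‖f z‖ₑ ^ p.toReal) (by fun_prop)).pow_const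
    _

end SliceNorm

section MixedNorm

variable {d : ℕ} {rx rv : ℝ} {f : EuclideanSpace ℝ (Fin d) × EuclideanSpace ℝ (Fin d) → ℝ}

theorem mixedNorm_eq_eLpNorm_sliceNorm (px pv : ℝ≥0∞) :
    mixedNorm d px pv f = eLpNorm (sliceNorm volume px f) pv volume := rfl

theorem dualElement_apply (x v : EuclideanSpace ℝ (Fin d)) :
    dualElement d rx rv f (x, v)
      = lpDual volume rv (sliceNorm volume (ENNReal.ofReal rx) f) v
        * lpDual volume rx (fun x => f (x, v)) x := by
  unfold dualElement lpDual mixedNorm sliceNorm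
  dsimp only
  set N := (eLpNorm (fun x => f (x, v)) (ENNReal.ofReal rx) volume).toReal
  split_ifs with hpos
  · rw [abs_of_pos hpos, Real.sign_of_pos hpos, show rv - rx = (rv - 1) + (1 - rx) by ring,
      Real.rpow_add hpos]
    ring
  · have hN0 : N = 0 := le_antisymm (not_lt.mp hpos) toReal_nonneg
    rw [hN0, Real.sign_zero]
    ring

theorem measurable_dualElement (hf : Measurable f) : Measurable (dualElement d rx rv f) := by
  have hN : Measurable fun z : EuclideanSpace ℝ (Fin d) × EuclideanSpace ℝ (Fin d) =>
      sliceNorm volume (ENNReal.ofReal rx) f z.2 :=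
    (measurable_sliceNorm ofReal_ne_top hf).comp measurable_snd
  exact measurable_const.mul <| Measurable.ite (measurableSet_lt measurable_const hN)
    (((hN.pow_const _).mul (hf.abs.pow_const _)).mul (Real.measurable_sign.comp hf))
    measurable_const

theorem integral_mul_dualElement (hrx : 1 < rx) (hrv : 1 < rv) (hf : Measurable f) :
    ∫ z, f z * dualElement d rx rv f z
      = (mixedNorm d (ENNReal.ofReal rx) (ENNReal.ofReal rv) f).toReal := by
  set N := sliceNorm volume (ENNReal.ofReal rx) f
  have hfactor : ∀ x v, f (x, v) * dualElement d rx rv f (x, v)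
      = lpDual volume rv N v * (f (x, v) * lpDual volume rx (fun x => f (x, v)) x) := by
    intro x v
    rw [dualElement_apply]
    ring
  have hdual_nonneg : ∀ v, 0 ≤ lpDual volume rv N v := fun v => lpDual_nonneg volume toReal_nonneg
  have hnonneg : ∀ z, 0 ≤ f z * dualElement d rx rv f z := by
    rintro ⟨x, v⟩
    rw [hfactor]
    exact mul_nonneg (hdual_nonneg v) (mul_lpDual_nonneg volume (h := fun x => f (x, v)) x)
  have hinner : ∀ v, ∫⁻ x, ENNReal.ofReal (f (x, v) * dualElement d rx rv f (x, v))
      = ENNReal.ofReal (N v * lpDual volume rv N v) := by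
    intro v
    simp_rw [hfactor, ofReal_mul (hdual_nonneg v)]
    rw [lintegral_const_mul' _ _ ofReal_ne_top, lintegral_ofReal_mul_lpDual volume hrx,
      ← ofReal_mul (hdual_nonneg v), mul_comm]
    rfl
  have hmeas : Measurable fun z => f z * dualElement d rx rv f z :=
    hf.mul (measurable_dualElement hf)
  rw [integral_eq_lintegral_of_nonneg_ae (ae_of_all _ hnonneg) hmeas.aestronglyMeasurable,
    Measure.volume_eq_prod, lintegral_prod_symm _ hmeas.ennreal_ofReal.aemeasurable]
  simp_rw [hinner]
  rw [lintegral_ofReal_mul_lpDual volume hrv, toReal_ofReal toReal_nonneg,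
    mixedNorm_eq_eLpNorm_sliceNorm]

theorem mixedNorm_dualElement_le_one (hrx : 1 < rx) (hrv : 1 < rv) :
    mixedNorm d (ENNReal.ofReal (rx / (rx - 1))) (ENNReal.ofReal (rv / (rv - 1)))
      (dualElement d rx rv f) ≤ 1 := by
  set N := sliceNorm volume (ENNReal.ofReal rx) f
  have hslice : ∀ v, ‖sliceNorm volume (ENNReal.ofReal (rx / (rx - 1))) (dualElement d rx rv f) v‖
      ≤ lpDual volume rv N v := by
    intro v
    have hN : 0 ≤ lpDual volume rv N v := lpDual_nonneg volume toReal_nonneg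
    have hsmul : (fun x => dualElement d rx rv f (x, v))
        = lpDual volume rv N v • lpDual volume rx (fun x => f (x, v)) :=
      funext fun x => dualElement_apply x v
    rw [sliceNorm, Real.norm_of_nonneg toReal_nonneg, hsmul, eLpNorm_const_smul,
      Real.enorm_of_nonneg hN]
    exact toReal_le_of_le_ofReal hN (mul_le_of_le_one_right' (eLpNorm_lpDual_le_one volume hrx))
  rw [mixedNorm_eq_eLpNorm_sliceNorm]
  exact (eLpNorm_mono_real hslice).trans (eLpNorm_lpDual_le_one volume hrv)

end MixedNorm

theorem dualElement_properties_general (d : ℕ) (rx rv : ℝ) (hrx : 1 < rx) (hrv : 1 < rv)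
    (f : EuclideanSpace ℝ (Fin d) × EuclideanSpace ℝ (Fin d) → ℝ)
    (hf : Measurable f) :
    (∫ z, f z * dualElement d rx rv f z)
        = (mixedNorm d (ENNReal.ofReal rx) (ENNReal.ofReal rv) f).toReal ∧
    mixedNorm d (ENNReal.ofReal (rx / (rx - 1))) (ENNReal.ofReal (rv / (rv - 1)))
        (dualElement d rx rv f) ≤ 1 :=
  ⟨integral_mul_dualElement hrx hrv hf, mixedNorm_dualElement_le_one hrx hrv⟩

/-- The explicit dual element pairs with f to its mixed norm, and has conjugate
    mixed norm at most 1. -/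
theorem dualElement_properties (d : ℕ) (rx rv : ℝ) (hrx : 1 < rx) (hrv : 1 < rv)
    (f : EuclideanSpace ℝ (Fin d) × EuclideanSpace ℝ (Fin d) → ℝ)
    (hf : Measurable f)
    (hfin : mixedNorm d (ENNReal.ofReal rx) (ENNReal.ofReal rv) f < ⊤)
    (hne : mixedNorm d (ENNReal.ofReal rx) (ENNReal.ofReal rv) f ≠ 0) :
    (∫ z, f z * dualElement d rx rv f z)
        = (mixedNorm d (ENNReal.ofReal rx) (ENNReal.ofReal rv) f).toReal ∧
    mixedNorm d (ENNReal.ofReal (rx / (rx - 1))) (ENNReal.ofReal (rv / (rv - 1)))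
        (dualElement d rx rv f) ≤ 1 :=
  dualElement_properties_general d rx rv hrx hrv f hf
end
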